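/- arXiv:math/0608062 — 5 statements merged into one kernel-verified Lean document; each statement's English description precedes it below -/
import Mathlib

section
/- If μ is a σ-finite measure on a measurable space invariant under a measurable map f (i.e., μ(f⁻¹(Y)) = μ(Y) for all measurable Y), and X is a measurable set, then the first return map f_X : X_f → X (defined on the set X_f of points of X that return to X under forward iteration, sending x to f^{n(x)}(x) where n(x) is the first return time) satisfies μ(f_X⁻¹(Y)) ≤ μ(Y) for every measurable Y ⊆ X. -/
open MeasureTheory Set

/-- **First return map does not increase an invariant measure.**
If `μ` is a σ-finite measure invariant under a measurable map `f`
(`μ (f⁻¹ Y) = μ Y` for all measurable `Y`), `X` is a measurable set,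
`X_f = {x ∈ X | ∃ n ≥ 1, f^[n] x ∈ X}` is the set of points of `X` returning to `X`,
and `f_X x = f^[n(x)] x` with `n(x)` the first return time, then
`μ (f_X⁻¹ Y) ≤ μ Y` for every measurable `Y ⊆ X`. -/
theorem first_return_map_measure_le
    {Ω : Type*} [MeasurableSpace Ω] (μ : Measure Ω) [SigmaFinite μ]
    (f : Ω → Ω) (hf : Measurable f)
    (hinv : ∀ A : Set Ω, MeasurableSet A → μ (f ⁻¹' A) = μ A)
    (X : Set Ω) (hX : MeasurableSet X)
    (Xf : Set Ω) (hXf : Xf = {x ∈ X | ∃ n : ℕ, 1 ≤ n ∧ f^[n] x ∈ X})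
    (fX : Ω → Ω) (hfX : ∀ x ∈ Xf, fX x = f^[sInf {n : ℕ | 1 ≤ n ∧ f^[n] x ∈ X}] x)
    (Y : Set Ω) (hY : MeasurableSet Y) (hYX : Y ⊆ X) :
    μ (Xf ∩ fX ⁻¹' Y) ≤ μ Y := by
  classical
  -- T n = points whose (n+1)-th iterate lies in Y and whose iterates 1..n avoid X
  set T : ℕ → Set Ω :=
    fun n => f^[n+1] ⁻¹' Y ∩ ⋂ k ∈ Finset.range n, f^[k+1] ⁻¹' Xᶜ with hT
  have hmemT : ∀ n x, x ∈ T n ↔ f^[n+1] x ∈ Y ∧ ∀ k < n, f^[k+1] x ∉ X := by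
    intro n x
    simp [hT, Set.mem_iInter]
  have hTmeas : ∀ n, MeasurableSet (T n) := by
    intro n
    refine ((hf.iterate (n+1)) hY).inter ?_
    refine MeasurableSet.biInter (Finset.range n).countable_toSet fun k _ => ?_
    exact (hf.iterate (k+1)) hX.compl
  -- recurrence : f ⁻¹' (T n \ X) = T (n+1)
  have hrec : ∀ n, f ⁻¹' (T n \ X) = T (n + 1) := by
    intro n
    ext x
    simp only [Set.mem_preimage, Set.mem_diff, hmemT]
    constructor
    · rintro ⟨⟨hy, hk⟩, hx⟩
      refine ⟨by rwa [Function.iterate_succ_apply], fun k hk' => ?_⟩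
      rcases Nat.eq_zero_or_pos k with rfl | hkpos
      · simpa using hx
      · obtain ⟨j, rfl⟩ := Nat.exists_eq_add_of_le hkpos
        have hj : j < n := by omega
        have := hk j hj
        have hje : Nat.succ 0 + j + 1 = j + 1 + 1 := by omega
        rw [hje, Function.iterate_succ_apply, Function.iterate_succ_apply]
        exact this
    · rintro ⟨hy, hk⟩
      refine ⟨⟨by rwa [Function.iterate_succ_apply] at hy, fun k hk' => ?_⟩, ?_⟩
      · have := hk (k + 1) (by omega)
        rwa [show k + 1 + 1 = (k + 1) + 1 from rfl, Function.iterate_succ_apply] at this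
      · simpa using hk 0 (by omega)
  -- A n = points of X with first return time n+1 landing in Y
  set A : ℕ → Set Ω := fun n => X ∩ T n with hA
  have hstep : ∀ n, μ (T n) = μ (A n) + μ (T (n + 1)) := by
    intro n
    have h1 : μ (T (n + 1)) = μ (T n \ X) := by
      rw [← hrec n, hinv _ ((hTmeas n).diff hX)]
    rw [h1]
    show μ (T n) = μ (X ∩ T n) + μ (T n \ X)
    rw [Set.inter_comm X (T n)]
    exact (measure_inter_add_diff (T n) hX).symm
  -- partial sums telescope
  have hpartial : ∀ n, (∑ k ∈ Finset.range n, μ (A k)) + μ (T n) = μ Y := by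
    intro n
    induction n with
    | zero =>
      simp only [Finset.range_zero, Finset.sum_empty, zero_add]
      have : T 0 = f ⁻¹' Y := by
        ext x; simp [hmemT]
      rw [this, hinv _ hY]
    | succ n ih =>
      rw [Finset.sum_range_succ, add_assoc, ← hstep n, ih]
  have htsum : (∑' n, μ (A n)) ≤ μ Y := by
    rw [ENNReal.tsum_eq_iSup_nat]
    refine iSup_le fun n => ?_
    calc (∑ k ∈ Finset.range n, μ (A k))
        ≤ (∑ k ∈ Finset.range n, μ (A k)) + μ (T n) := le_self_add
      _ = μ Y := hpartial n
  -- the set in question is covered by the A n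
  have hcover : Xf ∩ fX ⁻¹' Y ⊆ ⋃ n, A n := by
    rintro x ⟨hxXf, hxY⟩
    have hx := hxXf
    rw [hXf] at hx
    obtain ⟨hxX, n0, hn0⟩ := hx
    set S : Set ℕ := {n : ℕ | 1 ≤ n ∧ f^[n] x ∈ X} with hS
    have hne : S.Nonempty := ⟨n0, hn0⟩
    have hNmem : sInf S ∈ S := Nat.sInf_mem hne
    set N := sInf S with hN
    have hN1 : 1 ≤ N := hNmem.1
    have hfXx : fX x = f^[N] x := hfX x hxXf
    have hfY : f^[N] x ∈ Y := by rw [← hfXx]; exact hxY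
    refine Set.mem_iUnion.mpr ⟨N - 1, hxX, (hmemT _ x).mpr ⟨?_, ?_⟩⟩
    · rwa [show N - 1 + 1 = N by omega]
    · intro k hk
      intro hmem
      have : k + 1 ∈ S := ⟨by omega, hmem⟩
      have := Nat.sInf_le this
      omega
  calc μ (Xf ∩ fX ⁻¹' Y) ≤ μ (⋃ n, A n) := measure_mono hcover
    _ ≤ ∑' n, μ (A n) := measure_iUnion_le A
    _ ≤ μ Y := htsum
end

section
/- For a measurable map f of a measure space (Ω, μ), f is ergodic and conservative with respect to μ (a probability measure) if and only if every measurable set X with f(X) ⊆ X satisfies μ(X) = 0 or μ(X) = 1. -/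
open MeasureTheory Set

/-- **Ergodic + conservative ↔ forward invariant sets are trivial.**
For a measurable map `f` of a probability space `(Ω, μ)`, non-singular with respect
to `μ`, `f` is ergodic (every measurable `X` with `f⁻¹ X = X` has `μ X ∈ {0,1}`) and
conservative (every measurable `X` with `X ∩ ⋃_{k ≥ 1} f^[k]⁻¹ X = ∅` has `μ X = 0`)
if and only if every measurable set `X` with `f '' X ⊆ X` satisfies `μ X = 0` or `μ X = 1`. -/
theorem ergodic_and_conservative_iff_forward_invariant_trivial
    {Ω : Type*} [MeasurableSpace Ω] (μ : Measure Ω) [IsProbabilityMeasure μ]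
    (f : Ω → Ω) (hf : Measurable f)
    (hns : ∀ A : Set Ω, MeasurableSet A → (μ A = 0 ↔ μ (f ⁻¹' A) = 0)) :
    ((∀ X : Set Ω, MeasurableSet X → f ⁻¹' X = X → μ X = 0 ∨ μ X = 1) ∧
      (∀ X : Set Ω, MeasurableSet X →
        X ∩ (⋃ k : ℕ, ⋃ _ : 1 ≤ k, f^[k] ⁻¹' X) = ∅ → μ X = 0)) ↔
    (∀ X : Set Ω, MeasurableSet X → f '' X ⊆ X → μ X = 0 ∨ μ X = 1) := by
  constructor
  · rintro ⟨herg, hcons⟩ X hXm hX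
    have hsub : X ⊆ f ⁻¹' X := Set.image_subset_iff.mp hX
    have hm : ∀ k : ℕ, MeasurableSet ((f^[k]) ⁻¹' X) := fun k => (hf.iterate k) hXm
    -- X is contained in all iterated preimages
    have hchain : ∀ k : ℕ, X ⊆ (f^[k]) ⁻¹' X := by
      intro k
      induction k with
      | zero => simp
      | succ k ih =>
        intro ω hω
        have h1 : f ω ∈ X := hsub hω
        have h2 := ih h1
        simpa [Function.iterate_succ_apply] using h2
    -- null sets propagate under iterated preimages
    have hnull : ∀ (k : ℕ) (A : Set Ω), MeasurableSet A → μ A = 0 →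
        μ ((f^[k]) ⁻¹' A) = 0 := by
      intro k
      induction k with
      | zero => intro A _ h; simpa using h
      | succ k ih =>
        intro A hA h
        have h1 : μ ((f^[k]) ⁻¹' A) = 0 := ih A hA h
        have h2 := (hns _ ((hf.iterate k) hA)).mp h1
        rw [Function.iterate_succ, Set.preimage_comp]
        exact h2
    set A : Set Ω := f ⁻¹' X \ X with hAdef
    have hAm : MeasurableSet A := (hf hXm).diff hXm
    -- conservativity applied to A
    have hA0 : μ A = 0 := by
      apply hcons A hAm
      ext ω
      simp only [Set.mem_inter_iff, Set.mem_iUnion, Set.mem_empty_iff_false, iff_false,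
        not_and, not_exists, Set.mem_preimage]
      rintro hωA k hk hωk
      have h1 : f ω ∈ X := hωA.1
      obtain ⟨j, rfl⟩ : ∃ j, k = j + 1 := ⟨k - 1, (Nat.succ_pred_eq_of_pos hk).symm⟩
      have h2 : f^[j+1] ω ∈ X := by
        have := hchain j h1
        simpa [Function.iterate_succ_apply] using this
      exact hωk.2 h2
    -- measure of iterated-preimage overshoot is null
    have hdiff : ∀ k : ℕ, μ ((f^[k]) ⁻¹' X \ X) = 0 := by
      intro k
      induction k with
      | zero => simp
      | succ k ih =>
        have key : (f^[k+1]) ⁻¹' X \ X ⊆ ((f^[k]) ⁻¹' A) ∪ ((f^[k]) ⁻¹' X \ X) := by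
          rintro ω ⟨h1, h2⟩
          by_cases h3 : f^[k] ω ∈ X
          · exact Or.inr ⟨h3, h2⟩
          · refine Or.inl ⟨?_, h3⟩
            rw [Set.mem_preimage, Function.iterate_succ_apply'] at h1
            exact h1
        exact measure_mono_null key (measure_union_null (hnull k A hAm hA0) ih)
    set Y : Set Ω := ⋃ k : ℕ, (f^[k]) ⁻¹' X with hYdef
    have hYm : MeasurableSet Y := MeasurableSet.iUnion hm
    have hYinv : f ⁻¹' Y = Y := by
      ext ω
      simp only [hYdef, Set.mem_preimage, Set.mem_iUnion]
      constructor
      · rintro ⟨k, hk⟩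
        exact ⟨k + 1, by simpa [Function.iterate_succ_apply] using hk⟩
      · rintro ⟨k, hk⟩
        refine ⟨k, ?_⟩
        have h2 : f (f^[k] ω) ∈ X := hsub hk
        rw [← Function.iterate_succ_apply f k ω, Function.iterate_succ_apply']
        exact h2
    have hYX0 : μ (Y \ X) = 0 := by
      have hsub2 : Y \ X ⊆ ⋃ k : ℕ, ((f^[k]) ⁻¹' X \ X) := by
        rintro ω ⟨hω, hωX⟩
        obtain ⟨k, hk⟩ := Set.mem_iUnion.mp hω
        exact Set.mem_iUnion.mpr ⟨k, hk, hωX⟩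
      exact measure_mono_null hsub2 (measure_iUnion_null hdiff)
    have hXsubY : X ⊆ Y := by
      intro ω hω
      exact Set.mem_iUnion.mpr ⟨0, by simpa using hω⟩
    have hXY : μ X = μ Y := by
      refine le_antisymm (measure_mono hXsubY) ?_
      calc μ Y ≤ μ (X ∪ (Y \ X)) :=
            measure_mono (fun ω h => (em (ω ∈ X)).imp id (fun hx => ⟨h, hx⟩))
        _ ≤ μ X + μ (Y \ X) := measure_union_le _ _
        _ = μ X := by rw [hYX0, add_zero]
    rcases herg Y hYm hYinv with h0 | h1
    · exact Or.inl (hXY ▸ h0)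
    · exact Or.inr (hXY ▸ h1)
  · intro h
    constructor
    · intro X hXm hinv
      apply h X hXm
      rintro x ⟨y, hy, rfl⟩
      rw [← hinv] at hy
      exact hy
    · intro X hXm hdisj
      set W : Set Ω := ⋃ k : ℕ, ⋃ _ : 1 ≤ k, (f^[k]) ⁻¹' X with hWdef
      have hWm : MeasurableSet W :=
        MeasurableSet.iUnion fun k => MeasurableSet.iUnion fun _ => (hf.iterate k) hXm
      have hWfwd : f '' Wᶜ ⊆ Wᶜ := by
        rintro x ⟨y, hy, rfl⟩ hfy
        apply hy
        simp only [hWdef, Set.mem_iUnion, Set.mem_preimage] at hfy ⊢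
        obtain ⟨k, hk, hyk⟩ := hfy
        exact ⟨k + 1, le_trans hk (Nat.le_succ k),
          by simpa [Function.iterate_succ_apply] using hyk⟩
      rcases h Wᶜ hWm.compl hWfwd with h0 | h1
      · have hXW : X ⊆ Wᶜ := fun ω hω hωW =>
          Set.eq_empty_iff_forall_notMem.mp hdisj ω ⟨hω, hωW⟩
        exact measure_mono_null hXW h0
      · have hW0 : μ W = 0 := by
          exact (prob_compl_eq_one_iff (μ := μ) hWm).mp h1
        have hfX : f ⁻¹' X ⊆ W := by
          intro ω hω
          simp only [hWdef, Set.mem_iUnion, Set.mem_preimage]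
          exact ⟨1, le_refl 1, by simpa using hω⟩
        exact (hns X hXm).mpr (measure_mono_null hfX hW0)
end

section
/- Every piecewise linear expanding circle map f ∈ E₀^pl (i.e., f is a Lipschitz expanding local homeomorphism fixing 0 that is linear on each Markov interval of some order n) is ergodic and conservative with respect to Lebesgue measure. -/
/-!
Work with the lift `F` on `ℝ`. Markov intervals of order `m` have length at most `λ⁻ᵐ`, and
`F^[m]` maps each of them onto a unit interval `(p, p + 1)`. If `F` is affine on the Markov
intervals of order `n + 1`, then `F^[k]` is affine on those of order `n + k` and maps them onto
Markov intervals of order `n`. Take a density point `x` of a set `Y` of positive measure that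
avoids the countably many Markov points: small Markov intervals around `x` are filled by `Y` up
to a fraction `ε`, affine maps preserve this fraction, and the Lipschitz map `F^[n]` multiplies
the missing measure by at most `Kⁿ`. So some iterate maps `Y` onto a unit interval up to measure
`ε`. Consequently a measurable `Z` with `f^[k]⁻¹ Z` disjoint from a non-null `X` for all `k ≥ 1`
is null; an invariant set gives this with `Z = Xᶜ`, a wandering set with `Z = X`.
-/

open MeasureTheory Set

/-- Markov interval of order `n` expressed through a lift `F` of a circle map fixing `0`:
`(a,b)` is a connected component of the complement of `(F^[n])⁻¹(ℤ)`. -/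
def MarkovInterval (F : ℝ → ℝ) (n : ℕ) (a b : ℝ) : Prop :=
  a < b ∧ (∀ x ∈ Set.Ioo a b, F^[n] x ∉ Set.range (Int.cast : ℤ → ℝ)) ∧
    F^[n] a ∈ Set.range (Int.cast : ℤ → ℝ) ∧ F^[n] b ∈ Set.range (Int.cast : ℤ → ℝ)

/-- `F` is a lift of the circle map `f` of degree `d`, with `F 0 = 0`. -/
def IsLiftOf (f : UnitAddCircle → UnitAddCircle) (F : ℝ → ℝ) (d : ℤ) : Prop :=
  (∀ x : ℝ, f (x : UnitAddCircle) = ((F x : ℝ) : UnitAddCircle)) ∧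
    (∀ x : ℝ, F (x + 1) = F x + d) ∧ F 0 = 0

/-- `f ∈ E₀^lip`, via its lift: Lipschitz local homeomorphism of the circle fixing `0`
with `λ_f = essinf |f'| > 1`. -/
def MemELip (F : ℝ → ℝ) (lam : ℝ) : Prop :=
  (∃ K : NNReal, LipschitzWith K F) ∧ (StrictMono F ∨ StrictAnti F) ∧ 1 < lam ∧
    ∀ᵐ x ∂(volume : Measure ℝ), lam ≤ |deriv F x|

open Filter Topology Function
open scoped NNReal ENNReal Pointwise

theorem LipschitzOnWith.volume_image_le {K : ℝ≥0} {g : ℝ → ℝ} {s : Set ℝ}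
    (h : LipschitzOnWith K g s) : volume (g '' s) ≤ K * volume s := by
  simpa [hausdorffMeasure_real] using h.hausdorffMeasure_image_le zero_le_one

theorem Real.volume_image_affine (c₀ c₁ : ℝ) (s : Set ℝ) :
    volume ((fun x => c₀ + c₁ * x) '' s) = ENNReal.ofReal |c₁| * volume s := by
  have : (fun x => c₀ + c₁ * x) '' s = (fun x => c₀ + x) '' (c₁ • s) := by
    rw [← image_smul, image_image]; rfl
  rw [this, image_add_left, measure_preimage_add, Measure.addHaar_smul, Module.finrank_self,
    pow_one]

theorem Continuous.image_Ioo_of_injective {G : ℝ → ℝ} (hc : Continuous G)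
    (hinj : Injective G) {a b : ℝ} (hab : a ≤ b) :
    G '' Ioo a b = Ioo (min (G a) (G b)) (max (G a) (G b)) := by
  rcases hc.strictMono_of_inj hinj with h | h
  · rw [min_eq_left (h.monotone hab), max_eq_right (h.monotone hab)]
    refine Subset.antisymm ?_ (intermediate_value_Ioo hab hc.continuousOn)
    rintro _ ⟨z, hz, rfl⟩
    exact ⟨h hz.1, h hz.2⟩
  · rw [min_eq_right (h.antitone hab), max_eq_left (h.antitone hab)]
    refine Subset.antisymm ?_ (intermediate_value_Ioo' hab hc.continuousOn)
    rintro _ ⟨z, hz, rfl⟩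
    exact ⟨h hz.2, h hz.1⟩

theorem Monotone.mul_sub_le_sub_of_le_abs_deriv {F : ℝ → ℝ} {K : ℝ≥0} {lam x y : ℝ}
    (hK : LipschitzWith K F) (hF : Monotone F) (hder : ∀ᵐ z, lam ≤ |deriv F z|)
    (hxy : x ≤ y) : lam * (y - x) ≤ F y - F x := by
  have hac := (hK.lipschitzOnWith (s := uIcc x y)).absolutelyContinuousOnInterval
  rw [← hac.integral_deriv_eq_sub]
  calc lam * (y - x) = ∫ _ in x..y, lam := by simp [mul_comm]
    _ ≤ ∫ z in x..y, deriv F z := by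
      refine intervalIntegral.integral_mono_ae hxy intervalIntegrable_const
        hac.intervalIntegrable_deriv ?_
      filter_upwards [hder] with z hz
      rwa [abs_of_nonneg hF.deriv_nonneg] at hz

theorem mul_abs_sub_le_abs_sub_of_le_abs_deriv {F : ℝ → ℝ} {K : ℝ≥0} {lam : ℝ}
    (hK : LipschitzWith K F) (hinj : Injective F) (hder : ∀ᵐ z, lam ≤ |deriv F z|) (x y : ℝ) :
    lam * |y - x| ≤ |F y - F x| := by
  wlog hxy : x ≤ y generalizing x y
  · rw [abs_sub_comm, abs_sub_comm (F y)]; exact this y x (le_of_not_ge hxy)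
  rw [abs_of_nonneg (sub_nonneg.2 hxy)]
  rcases hK.continuous.strictMono_of_inj hinj with hF | hF
  · exact (hF.monotone.mul_sub_le_sub_of_le_abs_deriv hK hder hxy).trans (le_abs_self _)
  · have hneg : Monotone (-F) := hF.antitone.neg
    have := hneg.mul_sub_le_sub_of_le_abs_deriv hK.neg (by simpa [deriv.neg'] using hder) hxy
    rw [abs_sub_comm]
    simpa [sub_neg_eq_add, neg_add_eq_sub] using this.trans (le_abs_self _)

def IsAffineOn (g : ℝ → ℝ) (s : Set ℝ) : Prop :=
  ∃ c₀ c₁ : ℝ, EqOn g (fun x => c₀ + c₁ * x) s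

namespace IsAffineOn

variable {g h : ℝ → ℝ} {s t : Set ℝ}

theorem mono (hg : IsAffineOn g s) (hts : t ⊆ s) : IsAffineOn g t :=
  let ⟨c₀, c₁, hc⟩ := hg
  ⟨c₀, c₁, hc.mono hts⟩

theorem comp (hh : IsAffineOn h t) (hg : IsAffineOn g s) (hst : MapsTo g s t) :
    IsAffineOn (h ∘ g) s := by
  obtain ⟨e₀, e₁, he⟩ := hh
  obtain ⟨c₀, c₁, hc⟩ := hg
  refine ⟨e₀ + e₁ * c₀, e₁ * c₁, fun x hx => ?_⟩
  simp only [comp_apply]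
  rw [he (hst hx), hc hx]
  ring

theorem volume_image_le (hg : IsAffineOn g s) (hts : t ⊆ s) {ε : ℝ≥0∞}
    (ht : volume t ≤ ε * volume s) : volume (g '' t) ≤ ε * volume (g '' s) := by
  obtain ⟨c₀, c₁, hc⟩ := hg
  rw [(hc.mono hts).image_eq, hc.image_eq, Real.volume_image_affine, Real.volume_image_affine,
    mul_left_comm]
  gcongr

end IsAffineOn

section Markov

variable {F : ℝ → ℝ} {d : ℤ} {K : ℝ≥0} {lam : ℝ} {m n k : ℕ} {a b : ℝ}

theorem mapsTo_range_intCast (hd : ∀ x : ℝ, F (x + 1) = F x + d) (hF0 : F 0 = 0) :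
    MapsTo F (range (Int.cast : ℤ → ℝ)) (range (Int.cast : ℤ → ℝ)) := by
  have hF : ∀ p : ℤ, F p = p * d := by
    intro p
    induction p using Int.induction_on with
    | zero => simp [hF0]
    | succ p ih => push_cast at ih ⊢; rw [hd, ih]; ring
    | pred p ih =>
      have := hd (-p - 1 : ℤ)
      push_cast at this ih ⊢
      rw [sub_add_cancel, ih] at this
      linarith
  rintro _ ⟨p, rfl⟩
  exact ⟨p * d, by push_cast; exact (hF p).symm⟩

theorem iterate_mem_range_intCast_of_le (hd : ∀ x : ℝ, F (x + 1) = F x + d) (hF0 : F 0 = 0)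
    {x : ℝ} (hx : F^[n] x ∈ range (Int.cast : ℤ → ℝ)) (hnm : n ≤ m) :
    F^[m] x ∈ range (Int.cast : ℤ → ℝ) := by
  obtain ⟨k, rfl⟩ := Nat.exists_eq_add_of_le hnm
  rw [add_comm, iterate_add_apply]
  exact (mapsTo_range_intCast hd hF0).iterate k hx

theorem pow_mul_abs_sub_le_abs_iterate_sub (hK : LipschitzWith K F) (hinj : Injective F)
    (hlam : 0 ≤ lam) (hder : ∀ᵐ z, lam ≤ |deriv F z|) (m : ℕ) (x y : ℝ) :
    lam ^ m * |y - x| ≤ |F^[m] y - F^[m] x| := by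
  induction m with
  | zero => simp
  | succ m ih =>
    rw [iterate_succ_apply', iterate_succ_apply', pow_succ', mul_assoc]
    exact (mul_le_mul_of_nonneg_left ih hlam).trans
      (mul_abs_sub_le_abs_sub_of_le_abs_deriv hK hinj hder _ _)

theorem exists_markovInterval_mem (hc : Continuous F) (hd : ∀ x : ℝ, F (x + 1) = F x + d)
    (hF0 : F 0 = 0) {x : ℝ} (hx : F^[m] x ∉ range (Int.cast : ℤ → ℝ)) :
    ∃ a b, MarkovInterval F m a b ∧ x ∈ Ioo a b := by
  set S := F^[m] ⁻¹' range (Int.cast : ℤ → ℝ)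
  have hS : IsClosed S := Int.isClosedEmbedding_coe_real.isClosed_range.preimage (hc.iterate m)
  have hint : ∀ p : ℤ, (p : ℝ) ∈ S := fun p =>
    (mapsTo_range_intCast hd hF0).iterate m (mem_range_self p)
  have hA : IsClosed (S ∩ Iic x) := hS.inter isClosed_Iic
  have hB : IsClosed (S ∩ Ici x) := hS.inter isClosed_Ici
  have hAne : (S ∩ Iic x).Nonempty := ⟨⌊x⌋, hint _, Int.floor_le x⟩
  have hBne : (S ∩ Ici x).Nonempty :=
    ⟨(⌊x⌋ + 1 : ℤ), hint _, by push_cast; exact (Int.lt_floor_add_one x).le⟩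
  have hAbdd : BddAbove (S ∩ Iic x) := ⟨x, fun _ hy => hy.2⟩
  have hBbdd : BddBelow (S ∩ Ici x) := ⟨x, fun _ hy => hy.2⟩
  obtain ⟨haS, hax⟩ := hA.csSup_mem hAne hAbdd
  obtain ⟨hbS, hxb⟩ := hB.csInf_mem hBne hBbdd
  replace hax : sSup (S ∩ Iic x) < x := hax.lt_of_ne fun h => hx (h ▸ haS)
  replace hxb : x < sInf (S ∩ Ici x) := hxb.lt_of_ne fun h => hx (h ▸ hbS)
  refine ⟨_, _, ⟨hax.trans hxb, fun u hu huS => ?_, haS, hbS⟩, hax, hxb⟩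
  rcases le_total u x with hux | hxu
  · exact hu.1.not_ge (le_csSup hAbdd ⟨huS, hux⟩)
  · exact hu.2.not_ge (csInf_le hBbdd ⟨huS, hxu⟩)

namespace MarkovInterval

theorem exists_eq_intCast_of_zero (h : MarkovInterval F 0 a b) :
    ∃ p : ℤ, a = p ∧ b = p + 1 := by
  obtain ⟨hab, hint, ⟨p, rfl⟩, ⟨q, rfl⟩⟩ := h
  refine ⟨p, rfl, ?_⟩
  have hpq : p < q := by exact_mod_cast hab
  by_contra hne
  have hp1 : p + 1 < q := by
    refine lt_of_le_of_ne hpq ?_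
    rintro rfl
    exact hne (by push_cast; ring)
  exact hint (p + 1 : ℤ) ⟨by push_cast; linarith, by exact_mod_cast hp1⟩ (mem_range_self _)

theorem iterate_notMem (hd : ∀ x : ℝ, F (x + 1) = F x + d) (hF0 : F 0 = 0)
    (h : MarkovInterval F m a b) (hnm : n ≤ m) {x : ℝ} (hx : x ∈ Ioo a b) :
    F^[n] x ∉ range (Int.cast : ℤ → ℝ) := fun hn =>
  h.2.1 x hx (iterate_mem_range_intCast_of_le hd hF0 hn hnm)

theorem image_iterate (hc : Continuous F) (hinj : Injective F)
    (h : MarkovInterval F (n + k) a b) :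
    MarkovInterval F n (min (F^[k] a) (F^[k] b)) (max (F^[k] a) (F^[k] b)) ∧
      F^[k] '' Ioo a b = Ioo (min (F^[k] a) (F^[k] b)) (max (F^[k] a) (F^[k] b)) := by
  obtain ⟨hab, hint, ha, hb⟩ := h
  have himg := (hc.iterate k).image_Ioo_of_injective (hinj.iterate k) hab.le
  rw [iterate_add_apply] at ha hb
  refine ⟨⟨min_lt_max.2 ((hinj.iterate k).ne hab.ne), ?_, ?_, ?_⟩, himg⟩
  · rw [← himg]
    rintro _ ⟨u, hu, rfl⟩
    rw [← iterate_add_apply]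
    exact hint u hu
  · rcases min_choice (F^[k] a) (F^[k] b) with h | h <;> rw [h] <;> assumption
  · rcases max_choice (F^[k] a) (F^[k] b) with h | h <;> rw [h] <;> assumption

theorem exists_image_eq_Ioo (hc : Continuous F) (hinj : Injective F)
    (h : MarkovInterval F m a b) :
    ∃ p : ℤ, F^[m] '' Ioo a b = Ioo (p : ℝ) (p + 1) ∧ |F^[m] b - F^[m] a| = 1 := by
  rw [← zero_add m] at h
  obtain ⟨h', himg⟩ := h.image_iterate hc hinj
  obtain ⟨p, hp, hq⟩ := h'.exists_eq_intCast_of_zero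
  exact ⟨p, by rw [himg, hp, hq], by rw [← max_sub_min_eq_abs, hp, hq]; ring⟩

theorem pow_mul_sub_le_one (hK : LipschitzWith K F) (hinj : Injective F) (hlam : 0 ≤ lam)
    (hder : ∀ᵐ z, lam ≤ |deriv F z|) (h : MarkovInterval F m a b) : lam ^ m * (b - a) ≤ 1 := by
  obtain ⟨-, -, hlen⟩ := h.exists_image_eq_Ioo hK.continuous hinj
  calc lam ^ m * (b - a) = lam ^ m * |b - a| := by rw [abs_of_pos (sub_pos.2 h.1)]
    _ ≤ |F^[m] b - F^[m] a| := pow_mul_abs_sub_le_abs_iterate_sub hK hinj hlam hder m a b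
    _ = 1 := hlen

theorem exists_superset_of_le (hc : Continuous F) (hd : ∀ x : ℝ, F (x + 1) = F x + d)
    (hF0 : F 0 = 0) (h : MarkovInterval F m a b) (hnm : n ≤ m) :
    ∃ a' b', MarkovInterval F n a' b' ∧ Ioo a b ⊆ Ioo a' b' := by
  have hmid : (a + b) / 2 ∈ Ioo a b := ⟨by linarith [h.1], by linarith [h.1]⟩
  obtain ⟨a', b', h', hmid'⟩ :=
    exists_markovInterval_mem hc hd hF0 (h.iterate_notMem hd hF0 hnm hmid)
  refine ⟨a', b', h', Ioo_subset_Ioo ?_ ?_⟩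
  · by_contra! ha
    exact h.iterate_notMem hd hF0 hnm ⟨ha, hmid'.1.trans hmid.2⟩ h'.2.2.1
  · by_contra! hb
    exact h.iterate_notMem hd hF0 hnm ⟨hmid.1.trans hmid'.2, hb⟩ h'.2.2.2

end MarkovInterval

theorem iterate_isAffineOn (hc : Continuous F) (hinj : Injective F)
    (hd : ∀ x : ℝ, F (x + 1) = F x + d) (hF0 : F 0 = 0)
    (haff : ∀ a b, MarkovInterval F (n + 1) a b → IsAffineOn F (Ioo a b)) (k : ℕ) {a b : ℝ}
    (h : MarkovInterval F (n + k) a b) : IsAffineOn F^[k] (Ioo a b) := by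
  induction k generalizing a b with
  | zero => exact ⟨0, 1, fun x _ => by simp⟩
  | succ k ih =>
    obtain ⟨a', b', h', hsub⟩ :=
      h.exists_superset_of_le hc hd hF0 (by omega : n + 1 ≤ n + (k + 1))
    obtain ⟨hstep, himg⟩ := MarkovInterval.image_iterate (k := 1) hc hinj h
    rw [iterate_succ]
    exact (ih hstep).comp ((haff a' b' h').mono hsub) (himg ▸ mapsTo_image F _)

end Markov

theorem Real.ae_volume_Ioo_diff_le_mul {Y : Set ℝ} (hY : MeasurableSet Y) :
    ∀ᵐ x, x ∈ Y → ∀ ε > 0, ∃ δ > 0, ∀ a b, a < x → x < b → b - a ≤ δ →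
      volume (Ioo a b \ Y) ≤ ε * volume (Ioo a b) := by
  let v := IsUnifLocDoublingMeasure.vitaliFamily (volume : Measure ℝ) 1
  filter_upwards [v.ae_tendsto_measure_inter_div_of_measurableSet hY.compl] with x hx hxY ε hε
  rw [indicator_of_notMem (notMem_compl_iff.2 hxY)] at hx
  obtain ⟨δ, hδ, hsmall⟩ := v.eventually_filterAt_iff.1 (hx.eventually (gt_mem_nhds hε))
  refine ⟨δ, hδ, fun a b hax hxb hab => ?_⟩
  have hmem : Icc a b ∈ v.setsAt x := by
    rw [Real.Icc_eq_closedBall]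
    refine IsUnifLocDoublingMeasure.closedBall_mem_vitaliFamily_of_dist_le_mul _ ?_
      (by linarith)
    rw [Real.dist_eq, abs_le]
    constructor <;> linarith
  have hsub : Icc a b ⊆ Metric.closedBall x δ := by
    intro z hz
    rw [Metric.mem_closedBall, Real.dist_eq, abs_le]
    constructor <;> linarith [hz.1, hz.2]
  have hratio := (hsmall _ hmem hsub).le
  rw [ENNReal.div_le_iff (by simp [hax.trans hxb]) (by simp)] at hratio
  calc volume (Ioo a b \ Y) ≤ volume (Yᶜ ∩ Icc a b) :=
        measure_mono fun z hz => ⟨hz.2, Ioo_subset_Icc_self hz.1⟩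
    _ ≤ ε * volume (Icc a b) := hratio
    _ = ε * volume (Ioo a b) := by rw [Real.volume_Icc, Real.volume_Ioo]

section Expanding

variable {F : ℝ → ℝ} {d : ℤ} {K : ℝ≥0} {lam : ℝ} {n : ℕ}

theorem exists_markovInterval_volume_diff_le (hK : LipschitzWith K F) (hinj : Injective F)
    (hlam : 1 < lam) (hder : ∀ᵐ z, lam ≤ |deriv F z|) (hd : ∀ x : ℝ, F (x + 1) = F x + d)
    (hF0 : F 0 = 0) {Y : Set ℝ} (hY : MeasurableSet Y) (hY0 : volume Y ≠ 0) {ε : ℝ≥0∞}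
    (hε : 0 < ε) (N : ℕ) :
    ∃ m ≥ N, ∃ a b, MarkovInterval F m a b ∧ volume (Ioo a b \ Y) ≤ ε * volume (Ioo a b) := by
  have hS : (⋃ m, F^[m] ⁻¹' range (Int.cast : ℤ → ℝ)).Countable :=
    countable_iUnion fun m => (countable_range _).preimage (hinj.iterate m)
  obtain ⟨x, hxY, hxS, hx⟩ := Measure.exists_mem_of_measure_ne_zero_of_ae hY0
    (ae_restrict_of_ae ((hS.ae_notMem volume).and (Real.ae_volume_Ioo_diff_le_mul hY)))
  obtain ⟨δ, hδ, hδY⟩ := hx hxY ε hε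
  obtain ⟨m, hm, hNm⟩ :=
    (((tendsto_pow_atTop_atTop_of_one_lt hlam).atTop_mul_const hδ).eventually_gt_atTop 1
      |>.and (eventually_ge_atTop N)).exists
  obtain ⟨a, b, hab, hxab⟩ :=
    exists_markovInterval_mem hK.continuous hd hF0 fun h => hxS (mem_iUnion.2 ⟨m, h⟩)
  refine ⟨m, hNm, a, b, hab, hδY a b hxab.1 hxab.2 ?_⟩
  have hlen := hab.pow_mul_sub_le_one hK hinj (by linarith) hder
  exact (lt_of_mul_lt_mul_left (hlen.trans_lt hm) (by positivity)).le

theorem exists_iterate_volume_Ioo_diff_image_le (hK : LipschitzWith K F) (hinj : Injective F)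
    (hlam : 1 < lam) (hder : ∀ᵐ z, lam ≤ |deriv F z|) (hd : ∀ x : ℝ, F (x + 1) = F x + d)
    (hF0 : F 0 = 0) (haff : ∀ a b, MarkovInterval F (n + 1) a b → IsAffineOn F (Ioo a b))
    {Y : Set ℝ} (hY : MeasurableSet Y) (hY0 : volume Y ≠ 0) {ε : ℝ≥0∞} (hε : 0 < ε) :
    ∃ k ≥ 1, ∃ p : ℤ, volume (Ioo (p : ℝ) (p + 1) \ F^[k] '' Y) ≤ ε := by
  obtain ⟨ε', hε', hKε'⟩ : ∃ ε' > 0, (K ^ n : ℝ≥0) * ε' ≤ ε :=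
    ⟨ε / (K ^ n : ℝ≥0), ENNReal.div_pos_iff.2 ⟨hε.ne', ENNReal.coe_ne_top⟩, ENNReal.mul_div_le⟩
  obtain ⟨m, hm, a, b, hab, hdens⟩ :=
    exists_markovInterval_volume_diff_le hK hinj hlam hder hd hF0 hY hY0 hε' (n + 1)
  obtain ⟨k, rfl⟩ := Nat.exists_eq_add_of_le (n.le_succ.trans hm)
  obtain ⟨hab', himg⟩ := hab.image_iterate hK.continuous hinj
  set a' := min (F^[k] a) (F^[k] b)
  set b' := max (F^[k] a) (F^[k] b)
  obtain ⟨p, hp, -⟩ := hab'.exists_image_eq_Ioo hK.continuous hinj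
  have hunit := hab'.pow_mul_sub_le_one hK hinj (by linarith) hder
  have hcyl : volume (Ioo a' b' \ F^[k] '' Y) ≤ ε' := by
    calc _ = volume (F^[k] '' (Ioo a b \ Y)) := by rw [image_sdiff (hinj.iterate k), himg]
      _ ≤ ε' * volume (F^[k] '' Ioo a b) :=
        (iterate_isAffineOn hK.continuous hinj hd hF0 haff k hab).volume_image_le sdiff_subset
          hdens
      _ ≤ ε' := by
        rw [himg, Real.volume_Ioo]
        refine mul_le_of_le_one_right' (ENNReal.ofReal_le_one.2 ?_)
        exact (le_mul_of_one_le_left (sub_nonneg.2 hab'.1.le) (one_le_pow₀ hlam.le)).trans hunit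
  refine ⟨n + k, by omega, p, ?_⟩
  calc volume (Ioo (p : ℝ) (p + 1) \ F^[n + k] '' Y)
      = volume (F^[n] '' (Ioo a' b' \ F^[k] '' Y)) := by
        rw [image_sdiff (hinj.iterate n), hp, iterate_add, image_comp]
    _ ≤ (K ^ n : ℝ≥0) * ε' := by
      refine ((hK.iterate n).lipschitzOnWith.volume_image_le).trans ?_
      gcongr
    _ ≤ ε := hKε'

end Expanding

theorem UnitAddCircle.volume_eq_volume_preimage_inter_Ioo {X : Set UnitAddCircle}
    (hX : MeasurableSet X) (t : ℝ) :
    volume X = volume (((↑) : ℝ → UnitAddCircle) ⁻¹' X ∩ Ioo t (t + 1)) := by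
  rw [← (UnitAddCircle.measurePreserving_mk t).measure_preimage hX.nullMeasurableSet,
    Measure.restrict_apply' measurableSet_Ioc]
  exact measure_congr ((ae_eq_refl _).inter Ioo_ae_eq_Ioc).symm

instance : IsProbabilityMeasure (volume : Measure UnitAddCircle) :=
  ⟨UnitAddCircle.measure_univ⟩

theorem IsLiftOf.iterate_coe {f : UnitAddCircle → UnitAddCircle} {F : ℝ → ℝ} {d : ℤ}
    (h : IsLiftOf f F d) (k : ℕ) (x : ℝ) : f^[k] x = F^[k] x :=
  (Semiconj.iterate_right (fun y => (h.1 y).symm) k x).symm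

theorem volume_eq_zero_of_disjoint_preimage_iterate {f : UnitAddCircle → UnitAddCircle}
    {F : ℝ → ℝ} {d : ℤ} {K : ℝ≥0} {lam : ℝ} {n : ℕ} (hlift : IsLiftOf f F d)
    (hK : LipschitzWith K F) (hinj : Injective F) (hlam : 1 < lam)
    (hder : ∀ᵐ z, lam ≤ |deriv F z|)
    (haff : ∀ a b, MarkovInterval F (n + 1) a b → IsAffineOn F (Ioo a b))
    {X Z : Set UnitAddCircle} (hX : MeasurableSet X) (hX0 : volume X ≠ 0)
    (hZ : MeasurableSet Z) (hdisj : ∀ k ≥ 1, Disjoint X (f^[k] ⁻¹' Z)) : volume Z = 0 := by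
  have hY : MeasurableSet (((↑) : ℝ → UnitAddCircle) ⁻¹' X) :=
    (UnitAddCircle.measurePreserving_mk 0).measurable hX
  have hY0 : volume (((↑) : ℝ → UnitAddCircle) ⁻¹' X) ≠ 0 := fun h => hX0 <| by
    rw [UnitAddCircle.volume_eq_volume_preimage_inter_Ioo hX 0]
    exact measure_mono_null inter_subset_left h
  refine nonpos_iff_eq_zero.1 (le_of_forall_gt_imp_ge_of_dense fun ε hε => ?_)
  obtain ⟨k, hk, p, hp⟩ := exists_iterate_volume_Ioo_diff_image_le hK hinj hlam hder hlift.2.1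
    hlift.2.2 haff hY hY0 hε
  rw [UnitAddCircle.volume_eq_volume_preimage_inter_Ioo hZ p]
  refine (measure_mono ?_).trans hp
  rintro z ⟨hzZ, hz⟩
  refine ⟨hz, ?_⟩
  rintro ⟨y, hyX, rfl⟩
  exact disjoint_left.1 (hdisj k hk) hyX (by rwa [mem_preimage, hlift.iterate_coe])

/-- **Piecewise linear expanding maps are ergodic and conservative.**
If `f ∈ E₀^pl`, i.e. `f ∈ E₀^lip` and for some `n ≥ 1`, `f` is linear (affine) on each
Markov interval of order `n`, then `f` is ergodic and conservative with respect to
Lebesgue measure on the circle. -/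
theorem piecewise_linear_ergodic_conservative
    (f : UnitAddCircle → UnitAddCircle) (F : ℝ → ℝ) (d : ℤ) (lam : ℝ)
    (hlift : IsLiftOf f F d) (hlip : MemELip F lam)
    (hpl : ∃ n : ℕ, 1 ≤ n ∧ ∀ a b : ℝ, MarkovInterval F n a b →
      ∃ c₀ c₁ : ℝ, Set.EqOn F (fun x => c₀ + c₁ * x) (Set.Ioo a b)) :
    (∀ X : Set UnitAddCircle, MeasurableSet X → f ⁻¹' X = X →
        volume X = 0 ∨ volume X = 1) ∧
      (∀ X : Set UnitAddCircle, MeasurableSet X →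
        X ∩ (⋃ k : ℕ, ⋃ _ : 1 ≤ k, f^[k] ⁻¹' X) = ∅ → volume X = 0) := by
  obtain ⟨⟨K, hK⟩, hmono, hlam, hder⟩ := hlip
  obtain ⟨n, hn, haff⟩ := hpl
  obtain ⟨n, rfl⟩ : ∃ m, n = m + 1 := ⟨n - 1, by omega⟩
  have hinj : Injective F := hmono.elim StrictMono.injective StrictAnti.injective
  have key := @volume_eq_zero_of_disjoint_preimage_iterate f F d K lam n hlift hK hinj hlam hder
    haff
  refine ⟨fun X hX hinv => ?_, fun X hX hwand => ?_⟩
  · refine (eq_or_ne (volume X) 0).imp_right fun hX0 => ?_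
    rw [← prob_compl_eq_zero_iff hX]
    refine key hX hX0 hX.compl fun k _ => ?_
    rw [preimage_compl, preimage_iterate_eq, iterate_fixed hinv]
    exact disjoint_compl_right
  · by_contra hX0
    exact hX0 (key hX hX0 hX fun k hk =>
      disjoint_left.2 fun x hx hxk => hwand.subset ⟨hx, mem_iUnion₂.2 ⟨k, hk, hxk⟩⟩)
end

section
/- Let f be a C¹ expanding circle map with fixed point p, let n ≥ 1 satisfy |(fⁿ)'(x)| > 1 for all x, and set h(x) = Σ_{k=0}^{n−1} |(fᵏ)'(x)|. Let H be the orientation-preserving C¹ diffeomorphism of T¹ with H(p) = 0 and H'(x) = ((|d|−1)/(|d|ⁿ−1)) h(x), where d is the degree of f. Then the conjugate g = H ∘ f ∘ H⁻¹ satisfies |g'(x)| > 1 for all x ∈ T¹ and g(0) = 0. -/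
open Finset

/-!
With `h = Σ_{k<n} |(Fᵏ)'|`, the chain rule makes the sum telescope:
`h (F y) * |F' y| = h y - 1 + |(Fⁿ)' y|`.  Since `H' = c h`, the conjugate
`g = H ∘ F ∘ H⁻¹` has `|g' (H y)| = h (F y) |F' y| / h y = (h y - 1 + |(Fⁿ)' y|) / h y`,
which exceeds `1` exactly because `|(Fⁿ)' y| > 1`.
-/

theorem deriv_iterate_succ {𝕜 : Type*} [NontriviallyNormedField 𝕜] {F : 𝕜 → 𝕜}
    (hF : Differentiable 𝕜 F) (k : ℕ) (y : 𝕜) :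
    deriv (F^[k + 1]) y = deriv (F^[k]) (F y) * deriv F y := by
  rw [Function.iterate_succ]
  exact deriv_comp y ((hF.iterate k).differentiableAt) hF.differentiableAt

noncomputable def sumAbsDerivIterate (F : ℝ → ℝ) (n : ℕ) (x : ℝ) : ℝ :=
  ∑ k ∈ range n, |deriv (F^[k]) x|

section sumAbsDerivIterate

variable {F : ℝ → ℝ} {n : ℕ}

theorem one_le_sumAbsDerivIterate (hn : 0 < n) (x : ℝ) : 1 ≤ sumAbsDerivIterate F n x := by
  simpa [sumAbsDerivIterate] using single_le_sum (f := fun k => |deriv (F^[k]) x|)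
    (fun _ _ => abs_nonneg _) (mem_range.mpr hn)

theorem sumAbsDerivIterate_apply_mul_abs_deriv (hF : Differentiable ℝ F) (n : ℕ) (y : ℝ) :
    sumAbsDerivIterate F n (F y) * |deriv F y| =
      sumAbsDerivIterate F n y - 1 + |deriv (F^[n]) y| := by
  have hshift : sumAbsDerivIterate F n (F y) * |deriv F y| =
      ∑ k ∈ range n, |deriv (F^[k + 1]) y| := by
    simp only [sumAbsDerivIterate, sum_mul, deriv_iterate_succ hF, abs_mul]
  have htelescope := (sum_range_succ' (fun k => |deriv (F^[k]) y|) n).symm.trans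
    (sum_range_succ (fun k => |deriv (F^[k]) y|) n)
  simp only [Function.iterate_zero, deriv_id, abs_one] at htelescope
  rw [hshift, sumAbsDerivIterate]
  linarith

theorem one_lt_abs_conj_deriv (hF : Differentiable ℝ F) (hn : 0 < n) {y : ℝ}
    (hy : 1 < |deriv (F^[n]) y|) {c : ℝ} (hc : c ≠ 0) :
    1 < |c * sumAbsDerivIterate F n (F y) * deriv F y / (c * sumAbsDerivIterate F n y)| := by
  have hpos : 0 < sumAbsDerivIterate F n y :=
    zero_lt_one.trans_le (one_le_sumAbsDerivIterate hn y)
  have hpos' : 0 < sumAbsDerivIterate F n (F y) :=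
    zero_lt_one.trans_le (one_le_sumAbsDerivIterate hn (F y))
  rw [mul_assoc, mul_div_mul_left _ _ hc, abs_div, abs_mul, abs_of_pos hpos, abs_of_pos hpos',
    sumAbsDerivIterate_apply_mul_abs_deriv hF, one_lt_div hpos]
  linarith

end sumAbsDerivIterate

theorem StrictMono.continuous_of_rightInverse {α β : Type*} [LinearOrder α] [LinearOrder β]
    [TopologicalSpace α] [TopologicalSpace β] [OrderTopology α] [OrderTopology β]
    {H : α → β} {Hinv : β → α} (hH : StrictMono H) (hright : Function.RightInverse Hinv H) :
    Continuous Hinv :=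
  (hH.orderIsoOfRightInverse H Hinv hright).symm.continuous

theorem hasDerivAt_conj {𝕜 : Type*} [NontriviallyNormedField 𝕜] {F H Hinv ρ : 𝕜 → 𝕜}
    (hH : ∀ y, HasDerivAt H (ρ y) y) (hright : Function.RightInverse Hinv H) {x : 𝕜}
    (hHinv : ContinuousAt Hinv x) (hρ : ρ (Hinv x) ≠ 0) (hF : DifferentiableAt 𝕜 F (Hinv x)) :
    HasDerivAt (H ∘ F ∘ Hinv) (ρ (F (Hinv x)) * deriv F (Hinv x) / ρ (Hinv x)) x := by
  have hderivHinv : HasDerivAt Hinv (ρ (Hinv x))⁻¹ x :=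
    .of_local_left_inverse hHinv (hH _) hρ (Filter.Eventually.of_forall hright)
  rw [div_eq_mul_inv, mul_assoc]
  exact (hH _).comp x (hF.hasDerivAt.comp x hderivHinv)

theorem normalizingConstant_pos {m : ℝ} (hm : 1 < m) {n : ℕ} (hn : n ≠ 0) :
    0 < (m - 1) / (m ^ n - 1) :=
  div_pos (sub_pos.mpr hm) (sub_pos.mpr (one_lt_pow₀ hm hn))

theorem conjugate_is_uniformly_expanding_general
    (F : ℝ → ℝ) (d : ℤ) (hd : 2 ≤ d.natAbs)
    (hC1 : ContDiff ℝ 1 F)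
    (p : ℝ) (hp : F p = p)
    (n : ℕ) (hn : 1 ≤ n) (hn' : ∀ x : ℝ, 1 < |deriv (F^[n]) x|)
    (H Hinv : ℝ → ℝ)
    (hH0 : H p = 0)
    (hH' : ∀ x : ℝ, HasDerivAt H
      ((((d.natAbs : ℝ) - 1) / ((d.natAbs : ℝ) ^ n - 1)) *
        ∑ k ∈ Finset.range n, |deriv (F^[k]) x|) x)
    (hHmono : StrictMono H)
    (hinv₂ : Function.RightInverse Hinv H) :
    (∀ x : ℝ, 1 < |deriv (H ∘ F ∘ Hinv) x|) ∧ (H ∘ F ∘ Hinv) 0 = 0 := by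
  set c : ℝ := ((d.natAbs : ℝ) - 1) / ((d.natAbs : ℝ) ^ n - 1)
  have hc : 0 < c := normalizingConstant_pos (by exact_mod_cast hd) (by omega)
  have hF : Differentiable ℝ F := hC1.differentiable one_ne_zero
  have hHinv : Continuous Hinv := hHmono.continuous_of_rightInverse hinv₂
  refine ⟨fun x => ?_, ?_⟩
  · have hpos : 0 < c * sumAbsDerivIterate F n (Hinv x) :=
      mul_pos hc (zero_lt_one.trans_le (one_le_sumAbsDerivIterate hn _))
    rw [(hasDerivAt_conj (ρ := fun y => c * sumAbsDerivIterate F n y) hH' hinv₂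
      hHinv.continuousAt hpos.ne' (hF _)).deriv]
    exact one_lt_abs_conj_deriv hF hn (hn' _) hc.ne'
  · have hHinv0 : Hinv 0 = p := hHmono.injective (by rw [hinv₂, hH0])
    simp only [Function.comp_apply, hHinv0, hp, hH0]

/-- **Normalizing conjugation.**
Let `F` be a lift of a `C¹` expanding circle map `f` of degree `d` (`|d| ≥ 2`), with a
fixed point `p` (lift chosen so that `F p = p`), and let `n ≥ 1` satisfy
`|(fⁿ)'(x)| > 1` for all `x`.  Set `h(x) = Σ_{k<n} |(fᵏ)'(x)|`, and let `H` be (the lift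
of) the orientation-preserving `C¹` circle diffeomorphism with `H p = 0` and
`H' = ((|d|−1)/(|d|ⁿ−1)) h`, with inverse `H⁻¹`.  Then the conjugate
`g = H ∘ f ∘ H⁻¹` satisfies `|g'(x)| > 1` everywhere and `g 0 = 0`. -/
theorem conjugate_is_uniformly_expanding
    (F : ℝ → ℝ) (d : ℤ) (hd : 2 ≤ d.natAbs)
    (hliftF : ∀ x : ℝ, F (x + 1) = F x + d)
    (hC1 : ContDiff ℝ 1 F)
    (hexp : ∃ c : ℝ, 0 < c ∧ ∃ lam : ℝ, 1 < lam ∧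
      ∀ (n : ℕ) (x : ℝ), c * lam ^ n < |deriv (F^[n]) x|)
    (p : ℝ) (hp : F p = p)
    (n : ℕ) (hn : 1 ≤ n) (hn' : ∀ x : ℝ, 1 < |deriv (F^[n]) x|)
    (H Hinv : ℝ → ℝ)
    (hH0 : H p = 0)
    (hHlift : ∀ x : ℝ, H (x + 1) = H x + 1)
    (hH' : ∀ x : ℝ, HasDerivAt H
      ((((d.natAbs : ℝ) - 1) / ((d.natAbs : ℝ) ^ n - 1)) *
        ∑ k ∈ Finset.range n, |deriv (F^[k]) x|) x)
    (hHmono : StrictMono H)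
    (hinv₁ : Function.LeftInverse Hinv H) (hinv₂ : Function.RightInverse Hinv H) :
    (∀ x : ℝ, 1 < |deriv (H ∘ F ∘ Hinv) x|) ∧ (H ∘ F ∘ Hinv) 0 = 0 :=
  conjugate_is_uniformly_expanding_general F d hd hC1 p hp n hn hn' H Hinv hH0 hH' hHmono hinv₂
end

section
/- Suppose f ∈ E₀¹ is δ-good for every δ > 0. Then f admits no σ-finite invariant measure absolutely continuous with respect to Lebesgue measure. Concretely: if μ is such a measure with density ρ, choose c > 0 with m(Z) > 0 for Z = {c ≤ ρ ≤ 1.1c}, then a distorted first return map f_I on an interval I with m(I ∩ Z)/m(I) > 0.9 leads to μ(f_I⁻¹(Y)) > μ(Y) for Y = A ∩ Z, contradicting the inequality μ(f_I⁻¹(Y)) ≤ μ(Y) valid for invariant measures. -/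
open MeasureTheory Set ENNReal

/-- The first return time of `x` to the set `I` under `f` (junk value if `x` never returns). -/
noncomputable def retTime {α : Type*} (f : α → α) (I : Set α) (x : α) : ℕ :=
  sInf {n : ℕ | 1 ≤ n ∧ f^[n] x ∈ I}

/-- The first return map of `f` to the set `I`. -/
noncomputable def retMap {α : Type*} (f : α → α) (I : Set α) (x : α) : α :=
  f^[retTime f I x] x

/-- A non-singular self-map `φ` of an interval `I` is *distorted* if there is a measurable
`A ⊆ I` with `m(A)/m(I) > 0.4` on which the density `d(φ_* m_I)/d m_I` exceeds `2`. -/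
def Distorted (φ : UnitAddCircle → UnitAddCircle) (I : Set UnitAddCircle) : Prop :=
  ∃ A : Set UnitAddCircle, MeasurableSet A ∧ A ⊆ I ∧
    ENNReal.ofReal (0.4 : ℝ) * volume I < volume A ∧
    ∀ x ∈ A, (2 : ℝ≥0∞) <
      Measure.rnDeriv (Measure.map φ (volume.restrict I)) (volume.restrict I) x

/-- `f` (with lift `F`) is *`δ`-good*: there is a countable family `𝓘` of Markov intervals,
all of length at most `δ`, with `m(⋃ 𝓘) > 1 − δ`, such that for every `I ∈ 𝓘` the first
return map `f_I : I → I` is distorted. -/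
def DeltaGood (f : UnitAddCircle → UnitAddCircle) (F : ℝ → ℝ) (δ : ℝ) : Prop :=
  ∃ 𝓘 : Set (Set UnitAddCircle), 𝓘.Countable ∧
    (∀ I ∈ 𝓘, (∃ (n : ℕ) (a b : ℝ), MarkovInterval F n a b ∧
        I = (fun x : ℝ => (x : UnitAddCircle)) '' Set.Ioo a b) ∧
      volume I ≤ ENNReal.ofReal δ ∧ Distorted (retMap f I) I) ∧
    ENNReal.ofReal (1 - δ) < volume (⋃₀ 𝓘)

/-!
Suppose `μ` is a nonzero invariant aciσ with density `ρ`. Some band `Z = {c ≤ ρ < 1.1 c}` has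
positive Lebesgue measure, and on `Z` the measures `μ` and `m` agree up to the factor `1.1`.
Being `δ`-good for every `δ` provides, around a Lebesgue density point of `Z`, a short arc `I`
with distorted first return map `f_I` that `Z` fills to nine tenths. Distortion makes
`m(f_I⁻¹ Y) ≥ 2 m(Y)` for a large `Y ⊆ Z ∩ I`, while invariance of `μ` gives
`μ(f_I⁻¹ Y) ≤ μ(Y)`; comparing through the band gives a contradiction. The points of `I` that
never return form a wandering set, on which `f_I` is the identity, and the same distortion
argument shows that such sets are Lebesgue-null.
-/

open Filter Topology

theorem measurable_sInf_setOf_nat {α : Type*} [MeasurableSpace α] {p : ℕ → α → Prop}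
    (hp : ∀ n, MeasurableSet {x | p n x}) : Measurable fun x => sInf {n | p n x} := by
  refine measurable_to_countable' fun m => ?_
  have hchar : (fun x => sInf {n | p n x}) ⁻¹' {m} =
      {x | (p m x ∨ ((∀ n, ¬ p n x) ∧ m = 0)) ∧ ∀ k < m, ¬ p k x} := by
    ext x
    simp only [mem_preimage, mem_singleton_iff, mem_ofPred_eq]
    constructor
    · rintro rfl
      refine ⟨?_, fun k hk => Nat.notMem_of_lt_sInf hk⟩
      rcases eq_empty_or_nonempty {n | p n x} with h | h
      · exact Or.inr ⟨fun n hn => h.subset hn, by rw [h, Nat.sInf_empty]⟩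
      · exact Or.inl (Nat.sInf_mem h)
    · rintro ⟨hm | ⟨hnone, rfl⟩, hmin⟩
      · exact le_antisymm (Nat.sInf_le hm)
          (not_lt.1 fun h => hmin _ h (Nat.sInf_mem (s := {n | p n x}) ⟨m, hm⟩))
      · simp [hnone]
  rw [hchar]
  have hp' : ∀ n, Measurable (p n) := fun n => measurableSet_setOfPred.1 (hp n)
  exact measurableSet_setOfPred.2 (by fun_prop)

section ReturnTime

variable {α : Type*} {f : α → α} {I : Set α}

theorem retTime_eq_zero_iff {x : α} : retTime f I x = 0 ↔ ∀ k, 1 ≤ k → f^[k] x ∉ I := by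
  simp [retTime, Nat.sInf_eq_zero, eq_empty_iff_forall_notMem]

variable [MeasurableSpace α]

theorem measurable_retTime (hf : Measurable f) (hI : MeasurableSet I) :
    Measurable (retTime f I) :=
  measurable_sInf_setOf_nat fun n => (MeasurableSet.const (1 ≤ n)).inter (hf.iterate n hI)

theorem measurable_retMap (hf : Measurable f) (hI : MeasurableSet I) :
    Measurable (retMap f I) :=
  (measurable_from_prod_countable_left (f := fun p : α × ℕ => f^[p.2] p.1)
    fun n => hf.iterate n).comp (measurable_id.prodMk (measurable_retTime hf hI))

end ReturnTime

section FirstReturn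

variable {α : Type*} {f : α → α} {I Y : Set α}

/-- The points that land in `Y` at time `n + 1` after avoiding `I` at times `1, …, n`. -/
def hitAvoiding (f : α → α) (I Y : Set α) : ℕ → Set α
  | 0 => f ⁻¹' Y
  | n + 1 => f ⁻¹' (hitAvoiding f I Y n \ I)

theorem mem_hitAvoiding_of {n : ℕ} {x : α} (hY : f^[n + 1] x ∈ Y)
    (hI : ∀ k, 1 ≤ k → k ≤ n → f^[k] x ∉ I) : x ∈ hitAvoiding f I Y n := by
  induction n generalizing x with
  | zero => simpa [hitAvoiding] using hY
  | succ n ih =>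
    refine ⟨ih (by simpa using hY) fun k hk hkn => ?_, by simpa using hI 1 le_rfl (by omega)⟩
    simpa using hI (k + 1) (by omega) (by omega)

variable [MeasurableSpace α] {μ : Measure α}

theorem measurableSet_hitAvoiding (hf : Measurable f) (hI : MeasurableSet I)
    (hY : MeasurableSet Y) (n : ℕ) : MeasurableSet (hitAvoiding f I Y n) := by
  induction n with
  | zero => exact hf hY
  | succ n ih => exact hf (ih.diff hI)

theorem measure_hitAvoiding_add_sum (hμ : MeasurePreserving f μ μ) (hI : MeasurableSet I)
    (hY : MeasurableSet Y) (N : ℕ) :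
    μ (hitAvoiding f I Y N) + ∑ n ∈ Finset.range N, μ (hitAvoiding f I Y n ∩ I) = μ Y := by
  induction N with
  | zero => simpa [hitAvoiding] using hμ.measure_preimage hY.nullMeasurableSet
  | succ N ih =>
    have hstep : μ (hitAvoiding f I Y (N + 1)) + μ (hitAvoiding f I Y N ∩ I) =
        μ (hitAvoiding f I Y N) := by
      rw [hitAvoiding, hμ.measure_preimage
        ((measurableSet_hitAvoiding hμ.measurable hI hY N).diff hI).nullMeasurableSet]
      exact measure_sdiff_add_inter _ hI
    rw [Finset.sum_range_succ, ← add_assoc, add_right_comm, hstep, ih]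

theorem measure_inter_retMap_preimage_le (hμ : MeasurePreserving f μ μ) (hI : MeasurableSet I)
    (hY : MeasurableSet Y) (hret : ∀ y ∈ Y, retTime f I y ≠ 0) :
    μ (I ∩ retMap f I ⁻¹' Y) ≤ μ Y := by
  have hcover : I ∩ retMap f I ⁻¹' Y ⊆ ⋃ n, hitAvoiding f I Y n ∩ I := by
    rintro x ⟨hxI, hxY⟩
    have hτ : retTime f I x ≠ 0 := fun h0 => by
      simp only [mem_preimage, retMap, h0, Function.iterate_zero, id] at hxY
      exact hret x hxY h0
    obtain ⟨n, hn⟩ := Nat.exists_eq_add_one_of_ne_zero hτ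
    have hxY' : f^[n + 1] x ∈ Y := by rwa [mem_preimage, retMap, hn] at hxY
    refine mem_iUnion.2 ⟨n, mem_hitAvoiding_of hxY' fun k hk hkn hkI => ?_, hxI⟩
    exact Nat.notMem_of_lt_sInf (s := {k | 1 ≤ k ∧ f^[k] x ∈ I})
      (show k < retTime f I x by omega) ⟨hk, hkI⟩
  calc μ (I ∩ retMap f I ⁻¹' Y) ≤ ∑' n, μ (hitAvoiding f I Y n ∩ I) :=
        (measure_mono hcover).trans (measure_iUnion_le _)
    _ ≤ μ Y := ENNReal.tsum_le_of_sum_range_le fun N =>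
        le_add_self.trans_eq (measure_hitAvoiding_add_sum hμ hI hY N)

end FirstReturn

section DensityBand

variable {α : Type*} [MeasurableSpace α] {μ ν : Measure α}

theorem exists_rnDeriv_preimage_Ico_ne_zero [SigmaFinite μ] [SigmaFinite ν] (hμ : μ ≠ 0)
    (hμν : μ ≪ ν) {q : ℝ≥0∞} (hq : 1 < q) (hq' : q ≠ ∞) :
    ∃ c, c ≠ 0 ∧ c ≠ ∞ ∧ ν (μ.rnDeriv ν ⁻¹' Ico c (q * c)) ≠ 0 := by
  have hq0 : q ≠ 0 := (zero_lt_one.trans hq).ne'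
  by_contra! h
  have hbands : ∀ᵐ x ∂ν, ∀ k : ℤ, μ.rnDeriv ν x ∉ Ico (q ^ k) (q * q ^ k) :=
    ae_all_iff.2 fun k => measure_eq_zero_iff_ae_notMem.1
      (h _ (ENNReal.zpow_pos hq0 hq' k).ne' (ENNReal.zpow_lt_top hq0 hq' k).ne)
  have hzero : μ.rnDeriv ν =ᵐ[ν] 0 := by
    filter_upwards [hbands, Measure.rnDeriv_lt_top μ ν] with x hx hfin
    by_contra h0
    obtain ⟨k, hk⟩ := ENNReal.exists_mem_Ico_zpow h0 hfin.ne hq hq'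
    rw [ENNReal.zpow_add hq0 hq', zpow_one, mul_comm] at hk
    exact hx k hk
  apply hμ
  rw [← Measure.measure_univ_eq_zero, ← Measure.lintegral_rnDeriv hμν, lintegral_congr_ae hzero,
    Pi.zero_def, lintegral_zero]

theorem measure_le_mul_of_subset_rnDeriv_preimage_Ico [SigmaFinite μ] [SigmaFinite ν]
    (hμν : μ ≪ ν) {c q : ℝ≥0∞} (hc : c ≠ 0) (hc' : c ≠ ∞) {B B' : Set α}
    (hB : B ⊆ μ.rnDeriv ν ⁻¹' Ico c (q * c)) (hB' : B' ⊆ μ.rnDeriv ν ⁻¹' Ico c (q * c))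
    (hμB : μ B ≤ μ B') : ν B ≤ q * ν B' := by
  have hlower : c * ν B ≤ μ B := by
    rw [← Measure.setLIntegral_rnDeriv hμν, ← setLIntegral_const]
    exact setLIntegral_mono (Measure.measurable_rnDeriv μ ν) fun x hx => (hB hx).1
  have hupper : μ B' ≤ q * c * ν B' := by
    rw [← Measure.setLIntegral_rnDeriv hμν, ← setLIntegral_const]
    exact setLIntegral_mono measurable_const fun x hx => (hB' hx).2.le
  refine (ENNReal.mul_le_mul_iff_right hc hc').1 ?_
  calc c * ν B ≤ q * c * ν B' := hlower.trans (hμB.trans hupper)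
    _ = c * (q * ν B') := by ring

theorem measure_inter_retMap_preimage_le_mul_add [SigmaFinite μ] [SigmaFinite ν] {f : α → α}
    {I Y : Set α} (hf : MeasurePreserving f μ μ) (hμν : μ ≪ ν) {c q : ℝ≥0∞} (hc : c ≠ 0)
    (hc' : c ≠ ∞) (hI : MeasurableSet I) (hY : MeasurableSet Y)
    (hYZ : Y ⊆ μ.rnDeriv ν ⁻¹' Ico c (q * c)) (hret : ∀ y ∈ Y, retTime f I y ≠ 0) :
    ν (I ∩ retMap f I ⁻¹' Y) ≤ q * ν Y + ν (I \ μ.rnDeriv ν ⁻¹' Ico c (q * c)) :=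
  calc ν (I ∩ retMap f I ⁻¹' Y)
      ≤ ν (I ∩ retMap f I ⁻¹' Y ∩ μ.rnDeriv ν ⁻¹' Ico c (q * c)) +
          ν (I \ μ.rnDeriv ν ⁻¹' Ico c (q * c)) :=
        (measure_le_inter_add_sdiff _ _ _).trans
          (add_le_add le_rfl (measure_mono (sdiff_subset_sdiff_left inter_subset_left)))
    _ ≤ q * ν Y + ν (I \ μ.rnDeriv ν ⁻¹' Ico c (q * c)) := by
        gcongr
        exact measure_le_mul_of_subset_rnDeriv_preimage_Ico hμν hc hc' inter_subset_right hYZ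
          ((measure_mono inter_subset_left).trans (measure_inter_retMap_preimage_le hf hI hY hret))

end DensityBand

theorem mul_measure_le_of_le_rnDeriv {β : Type*} [MeasurableSpace β] {ρ ν : Measure β}
    {Y : Set β} {c : ℝ≥0∞} (hc : ∀ x ∈ Y, c ≤ ρ.rnDeriv ν x) : c * ν Y ≤ ρ Y :=
  calc c * ν Y = ∫⁻ _ in Y, c ∂ν := (setLIntegral_const Y c).symm
    _ ≤ ∫⁻ x in Y, ρ.rnDeriv ν x ∂ν := setLIntegral_mono (Measure.measurable_rnDeriv ρ ν) hc
    _ ≤ ρ Y := Measure.setLIntegral_rnDeriv_le Y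

theorem Distorted.exists_subset_volume_lt {φ : UnitAddCircle → UnitAddCircle}
    {I S : Set UnitAddCircle} (hd : Distorted φ I) (hφ : Measurable φ) (hS : MeasurableSet S)
    (hIS : 10 * volume (I \ S) ≤ volume I) :
    ∃ Y ⊆ I ∩ S, MeasurableSet Y ∧ 11 * volume Y + volume I < 10 * volume (I ∩ φ ⁻¹' Y) := by
  obtain ⟨A, hA, hAI, hAvol, hA2⟩ := hd
  -- `Y = A ∩ S` carries more than `3/10` of `m(I)`, and the return map doubles its mass.
  have hY : MeasurableSet (A ∩ S) := hA.inter hS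
  refine ⟨A ∩ S, inter_subset_inter_left S hAI, hY, ?_⟩
  have hexpand : 2 * volume (A ∩ S) ≤ volume (I ∩ φ ⁻¹' (A ∩ S)) := by
    have := mul_measure_le_of_le_rnDeriv fun x (hx : x ∈ A ∩ S) => (hA2 x hx.1).le
    rwa [Measure.restrict_eq_self _ (inter_subset_left.trans hAI), Measure.map_apply hφ hY,
      Measure.restrict_apply (hφ hY), inter_comm (φ ⁻¹' _)] at this
  have hcover : volume A ≤ volume (A ∩ S) + volume (I \ S) :=
    (measure_mono fun x hx => (em (x ∈ S)).imp (fun h => ⟨hx, h⟩) fun h => ⟨hAI hx, h⟩).trans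
      (measure_union_le _ _)
  have h₁ := ENNReal.toReal_mono (measure_ne_top _ _) hexpand
  have h₂ := ENNReal.toReal_mono (by finiteness) hcover
  have h₃ := ENNReal.toReal_mono (measure_ne_top _ _) hIS
  have h₄ := ENNReal.toReal_strict_mono (measure_ne_top _ _) hAvol
  rw [← ENNReal.toReal_lt_toReal (by finiteness) (by finiteness),
    ENNReal.toReal_add (by finiteness) (measure_ne_top _ _)]
  simp only [ENNReal.toReal_mul, ENNReal.toReal_add (measure_ne_top _ _) (measure_ne_top _ _),
    ENNReal.toReal_ofReal (by norm_num : (0 : ℝ) ≤ 0.4), ENNReal.toReal_ofNat]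
    at h₁ h₂ h₃ h₄ ⊢
  linarith [ENNReal.toReal_nonneg (a := volume I)]

namespace UnitAddCircle

def arc (a b : ℝ) : Set UnitAddCircle := (fun x : ℝ => (x : UnitAddCircle)) '' Ioo a b

theorem isOpen_arc (a b : ℝ) : IsOpen (arc a b) :=
  QuotientAddGroup.isOpenMap_coe _ isOpen_Ioo

theorem volume_arc_of_le {a b : ℝ} (hab : b - a ≤ 1) :
    volume (arc a b) = ENNReal.ofReal (b - a) := by
  have hpre : (fun x : ℝ => (x : UnitAddCircle)) ⁻¹' arc a b ∩ Ioc a (a + 1) = Ioo a b := by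
    refine Subset.antisymm ?_ fun x hx => ⟨mem_image_of_mem _ hx, hx.1, by linarith [hx.2]⟩
    rintro x ⟨⟨u, hu, hux⟩, hx⟩
    have hux' : u = x := (AddCircle.coe_eq_coe_iff_of_mem_Ioc (p := (1 : ℝ))
      ⟨hu.1, by linarith [hu.2]⟩ hx).1 hux
    exact hux' ▸ hu
  calc volume (arc a b)
      = volume.restrict (Ioc a (a + 1)) ((fun x : ℝ => (x : UnitAddCircle)) ⁻¹' arc a b) :=
        ((UnitAddCircle.measurePreserving_mk a).measure_preimage
          (isOpen_arc a b).measurableSet.nullMeasurableSet).symm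
    _ = ENNReal.ofReal (b - a) := by
        rw [Measure.restrict_apply' measurableSet_Ioc, hpre, Real.volume_Ioo]

theorem volume_arc (a b : ℝ) :
    volume (arc a b) = ENNReal.ofReal (min (b - a) 1) := by
  rcases le_total (b - a) 1 with hab | hab
  · rw [min_eq_left hab, volume_arc_of_le hab]
  · rw [min_eq_right hab, ENNReal.ofReal_one]
    refine le_antisymm (UnitAddCircle.measure_univ ▸ measure_mono (subset_univ _)) ?_
    calc (1 : ℝ≥0∞) = volume (arc a (a + 1)) := by
          rw [volume_arc_of_le (by linarith), add_sub_cancel_left, ENNReal.ofReal_one]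
      _ ≤ _ := measure_mono (image_mono (Ioo_subset_Ioo_right (by linarith)))

theorem arc_subset_closedBall {a b t : ℝ} (ht : t ∈ Ioo a b) :
    arc a b ⊆ Metric.closedBall (t : UnitAddCircle) (b - a) := by
  rintro _ ⟨u, hu, rfl⟩
  rw [← mem_preimage, AddCircle.coe_real_preimage_closedBall_eq_iUnion]
  refine mem_iUnion.2 ⟨0, ?_⟩
  rw [zero_smul, add_zero, Metric.mem_closedBall, Real.dist_eq, abs_le]
  constructor <;> linarith [hu.1, hu.2, ht.1, ht.2]

/-- The ball is twice as long as the arc, so the `5%` of it missed by `S` is a tenth of the arc. -/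
theorem ten_mul_volume_arc_diff_le {a b t : ℝ} {S : Set UnitAddCircle} (ht : t ∈ Ioo a b)
    (hab : b - a ≤ 1 / 2) (hS : MeasurableSet S)
    (hdense : ENNReal.ofReal 0.95 < volume (S ∩ Metric.closedBall (t : UnitAddCircle) (b - a)) /
      volume (Metric.closedBall (t : UnitAddCircle) (b - a))) :
    10 * volume (arc a b \ S) ≤ volume (arc a b) := by
  set B := Metric.closedBall (t : UnitAddCircle) (b - a)
  have hB : volume B = ENNReal.ofReal (2 * (b - a)) := by
    rw [AddCircle.volume_closedBall, min_eq_right (by linarith)]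
  have hBS : ENNReal.ofReal 0.95 * volume B < volume (S ∩ B) := by
    refine (ENNReal.lt_div_iff_mul_lt (Or.inl ?_) (Or.inl (measure_ne_top _ _))).1 hdense
    rw [hB, ENNReal.ofReal_ne_zero_iff]
    linarith [ht.1, ht.2]
  have hsplit := measure_sdiff_add_inter (μ := volume) B hS
  have hIS := measure_mono (μ := volume) (sdiff_subset_sdiff_left (arc_subset_closedBall ht) :
    arc a b \ S ⊆ B \ S)
  have h₁ := ENNReal.toReal_strict_mono (measure_ne_top _ _) hBS
  have h₂ := congrArg ENNReal.toReal hsplit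
  have h₃ := ENNReal.toReal_mono (measure_ne_top _ _) hIS
  rw [← ENNReal.toReal_le_toReal (by finiteness) (measure_ne_top _ _),
    volume_arc_of_le (by linarith)]
  rw [ENNReal.toReal_add (measure_ne_top _ _) (measure_ne_top _ _), inter_comm] at h₂
  simp only [ENNReal.toReal_mul, hB, ENNReal.toReal_ofReal (by norm_num : (0 : ℝ) ≤ 0.95),
    ENNReal.toReal_ofNat, ENNReal.toReal_ofReal (by linarith [ht.1, ht.2] : 0 ≤ 2 * (b - a)),
    ENNReal.toReal_ofReal (by linarith [ht.1, ht.2] : 0 ≤ b - a)] at h₁ h₂ ⊢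
  linarith

end UnitAddCircle

open UnitAddCircle

section GoodMaps

variable {f : UnitAddCircle → UnitAddCircle} {F : ℝ → ℝ}

theorem ae_forall_exists_distorted_arc (hgood : ∀ δ : ℝ, 0 < δ → DeltaGood f F δ) :
    ∀ᵐ x, ∀ ε : ℝ, 0 < ε → ∃ a b : ℝ, x ∈ arc a b ∧ volume (arc a b) ≤ ENNReal.ofReal ε ∧
      Distorted (retMap f (arc a b)) (arc a b) := by
  let P : ℝ → UnitAddCircle → Prop := fun ε x => ∃ a b : ℝ, x ∈ arc a b ∧
    volume (arc a b) ≤ ENNReal.ofReal ε ∧ Distorted (retMap f (arc a b)) (arc a b)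
  have hnull : ∀ ε : ℝ, 0 < ε → volume {x | ¬ P ε x} = 0 := by
    intro ε hε
    refine le_antisymm (ENNReal.le_of_forall_pos_le_add fun η hη _ => ?_) bot_le
    obtain ⟨𝓘, -, h𝓘, hcover⟩ := hgood (min (η : ℝ) ε) (lt_min hη hε)
    have hopen : IsOpen (⋃₀ 𝓘) := isOpen_sUnion fun I hI => by
      obtain ⟨⟨n, a, b, -, rfl⟩, -⟩ := h𝓘 I hI
      exact isOpen_arc a b
    have hsub : {x | ¬ P ε x} ⊆ (⋃₀ 𝓘)ᶜ := by
      rintro x hx ⟨I, hI, hxI⟩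
      obtain ⟨⟨n, a, b, -, rfl⟩, hvol, hd⟩ := h𝓘 I hI
      exact hx ⟨a, b, hxI, hvol.trans (ENNReal.ofReal_le_ofReal (min_le_right _ _)), hd⟩
    have hone : (1 : ℝ≥0∞) ≤ ENNReal.ofReal (min (η : ℝ) ε) + volume (⋃₀ 𝓘) :=
      calc (1 : ℝ≥0∞) = ENNReal.ofReal (min (η : ℝ) ε + (1 - min (η : ℝ) ε)) := by simp
        _ ≤ _ := ENNReal.ofReal_add_le.trans (add_le_add_right hcover.le _)
    calc _ ≤ volume (⋃₀ 𝓘)ᶜ := measure_mono hsub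
      _ = 1 - volume (⋃₀ 𝓘) := by
        rw [measure_compl hopen.measurableSet (measure_ne_top _ _), UnitAddCircle.measure_univ]
      _ ≤ ENNReal.ofReal (min (η : ℝ) ε) := tsub_le_iff_right.2 hone
      _ ≤ 0 + η := by
        rw [zero_add, ← ENNReal.ofReal_coe_nnreal]
        exact ENNReal.ofReal_le_ofReal (min_le_left _ _)
  filter_upwards [ae_all_iff.2 fun n : ℕ => ae_iff.2 (hnull (1 / (n + 1)) (by positivity))]
    with x hx ε hε
  obtain ⟨n, hn⟩ := exists_nat_one_div_lt hε
  obtain ⟨a, b, hxab, hvol, hd⟩ := hx n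
  exact ⟨a, b, hxab, hvol.trans (ENNReal.ofReal_le_ofReal hn.le), hd⟩

theorem exists_distorted_arc_ten_mul_volume_diff_le
    (hgood : ∀ δ : ℝ, 0 < δ → DeltaGood f F δ) {S : Set UnitAddCircle} (hS : MeasurableSet S)
    (hS0 : volume S ≠ 0) :
    ∃ a b : ℝ, Distorted (retMap f (arc a b)) (arc a b) ∧
      10 * volume (arc a b \ S) ≤ volume (arc a b) := by
  have := ae_restrict_neBot.2 hS0
  obtain ⟨x, hxS, hdense, hcover⟩ := ((ae_restrict_mem hS).and
    ((IsUnifLocDoublingMeasure.ae_tendsto_measure_inter_div volume S 1).and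
      (ae_restrict_of_ae (ae_forall_exists_distorted_arc hgood)))).exists
  have hev : ∀ᶠ r in 𝓝[>] (0 : ℝ), ENNReal.ofReal 0.95 <
      volume (S ∩ Metric.closedBall x r) / volume (Metric.closedBall x r) :=
    (hdense (fun _ => x) id tendsto_id (eventually_nhdsWithin_of_forall fun r hr =>
      Metric.mem_closedBall_self (by simpa using le_of_lt hr))).eventually
      (lt_mem_nhds (by rw [← ENNReal.ofReal_one, ENNReal.ofReal_lt_ofReal_iff] <;> norm_num))
  obtain ⟨r₀, hr₀, hball⟩ := (nhdsGT_basis (0 : ℝ)).eventually_iff.1 hev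
  obtain ⟨a, b, ⟨t, ht, rfl⟩, hvol, hd⟩ := hcover (min (r₀ / 2) (1 / 2)) (by positivity)
  have hba : b - a ≤ min (r₀ / 2) (1 / 2) := by
    rw [volume_arc, ENNReal.ofReal_le_ofReal_iff (by positivity)] at hvol
    exact le_of_not_gt fun h => hvol.not_gt (lt_min h (by linarith [min_le_right (r₀ / 2) (1 / 2)]))
  refine ⟨a, b, hd, ten_mul_volume_arc_diff_le ht (hba.trans (min_le_right _ _)) hS
    (hball ⟨by linarith [ht.1, ht.2], ?_⟩)⟩
  linarith [min_le_left (r₀ / 2) (1 / 2)]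

theorem volume_eq_zero_of_wandering (hgood : ∀ δ : ℝ, 0 < δ → DeltaGood f F δ)
    (hf : Measurable f) {S : Set UnitAddCircle} (hS : MeasurableSet S)
    (hwander : ∀ x ∈ S, ∀ k, 1 ≤ k → f^[k] x ∉ S) : volume S = 0 := by
  by_contra hS0
  obtain ⟨a, b, hd, hfill⟩ := exists_distorted_arc_ten_mul_volume_diff_le hgood hS hS0
  obtain ⟨Y, hYIS, -, hlt⟩ := hd.exists_subset_volume_lt
    (measurable_retMap hf (isOpen_arc a b).measurableSet) hS hfill
  -- A point of `S` cannot return to `S`, so the return map fixes it.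
  have hfixed : arc a b ∩ retMap f (arc a b) ⁻¹' Y ⊆ Y ∪ (arc a b \ S) := by
    rintro x ⟨hxI, hxY⟩
    by_cases hxS : x ∈ S
    · have h0 : retTime f (arc a b) x = 0 := by
        by_contra h0
        exact hwander x hxS _ (Nat.one_le_iff_ne_zero.2 h0) (hYIS hxY).2
      left
      simpa [retMap, h0] using hxY
    · exact Or.inr ⟨hxI, hxS⟩
  refine hlt.not_ge ?_
  calc 10 * volume (arc a b ∩ retMap f (arc a b) ⁻¹' Y)
      ≤ 10 * volume Y + 10 * volume (arc a b \ S) := by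
        rw [← mul_add]
        gcongr
        exact (measure_mono hfixed).trans (measure_union_le _ _)
    _ ≤ 11 * volume Y + volume (arc a b) := by gcongr; norm_num

theorem volume_setOf_retTime_eq_zero (hgood : ∀ δ : ℝ, 0 < δ → DeltaGood f F δ)
    (hf : Measurable f) {I : Set UnitAddCircle} (hI : MeasurableSet I) :
    volume {x ∈ I | retTime f I x = 0} = 0 :=
  volume_eq_zero_of_wandering hgood hf
    (hI.inter (measurable_retTime hf hI (measurableSet_singleton 0)))
    fun _ hx k hk hkI => retTime_eq_zero_iff.1 hx.2 k hk hkI.1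

end GoodMaps

theorem delta_good_forall_implies_no_acis_general
    (f : UnitAddCircle → UnitAddCircle) (F : ℝ → ℝ) (hmeas : Measurable f)
    (hgood : ∀ δ : ℝ, 0 < δ → DeltaGood f F δ) :
    ∀ μ : Measure UnitAddCircle, SigmaFinite μ → μ ≪ volume →
      (∀ A : Set UnitAddCircle, MeasurableSet A → μ (f ⁻¹' A) = μ A) → μ = 0 := by
  intro μ _ hμ hinv
  by_contra hμ0
  have hpres : MeasurePreserving f μ μ :=
    ⟨hmeas, Measure.ext fun A hA => by rw [Measure.map_apply hmeas hA, hinv A hA]⟩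
  obtain ⟨c, hc, hc', hZ0⟩ := exists_rnDeriv_preimage_Ico_ne_zero hμ0 hμ (q := 11 / 10)
    (by rw [ENNReal.lt_div_iff_mul_lt] <;> norm_num)
    (ENNReal.div_ne_top (by norm_num) (by norm_num))
  set Z := μ.rnDeriv volume ⁻¹' Ico c (11 / 10 * c)
  have hZ : MeasurableSet Z := Measure.measurable_rnDeriv _ _ measurableSet_Ico
  obtain ⟨a, b, hd, hfill⟩ := exists_distorted_arc_ten_mul_volume_diff_le hgood hZ hZ0
  set I := arc a b
  have hI : MeasurableSet I := (isOpen_arc a b).measurableSet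
  set N := {x ∈ I | retTime f I x = 0}
  have hN : MeasurableSet N := hI.inter (measurable_retTime hmeas hI (measurableSet_singleton 0))
  have hfill' : 10 * volume (I \ (Z \ N)) ≤ volume I := by
    have hIN : volume (I ∩ N) = 0 :=
      measure_mono_null inter_subset_right (volume_setOf_retTime_eq_zero hgood hmeas hI)
    refine le_trans ?_ hfill
    rw [sdiff_sdiff_right]
    gcongr 10 * ?_
    exact (measure_union_le _ _).trans_eq (by rw [hIN, add_zero])
  obtain ⟨Y, hYsub, hY, hlt⟩ := hd.exists_subset_volume_lt (measurable_retMap hmeas hI)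
    (hZ.diff hN) hfill'
  have hband := measure_inter_retMap_preimage_le_mul_add hpres hμ hc hc' hI hY
    (fun y hy => (hYsub hy).2.1) fun y hy h0 => (hYsub hy).2.2 ⟨(hYsub hy).1, h0⟩
  refine hlt.not_ge ?_
  calc 10 * volume (I ∩ retMap f I ⁻¹' Y) ≤ 10 * (11 / 10 * volume Y + volume (I \ Z)) := by
        gcongr
    _ ≤ 11 * volume Y + volume I := by
        rw [mul_add, ← mul_assoc, ENNReal.mul_div_cancel (by norm_num) (by norm_num)]
        gcongr

/-- **The goodness criterion: `δ`-good for all `δ` implies no aciσ.**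
If `f ∈ E₀¹` (a `C¹` expanding circle map fixing `0`, with `|(fⁿ)'| > λⁿ`) is `δ`-good for
every `δ > 0`, then `f` admits no (nonzero) σ-finite invariant measure absolutely
continuous with respect to Lebesgue measure. -/
theorem delta_good_forall_implies_no_acis
    (f : UnitAddCircle → UnitAddCircle) (F : ℝ → ℝ) (d : ℤ)
    (hlift : IsLiftOf f F d) (hmeas : Measurable f)
    (hC1 : ContDiff ℝ 1 F)
    (hexp : ∃ lam : ℝ, 1 < lam ∧ ∀ n : ℕ, 1 ≤ n → ∀ x : ℝ,
      lam ^ n < |deriv (F^[n]) x|)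
    (hgood : ∀ δ : ℝ, 0 < δ → DeltaGood f F δ) :
    ∀ μ : Measure UnitAddCircle, SigmaFinite μ → μ ≪ volume →
      (∀ A : Set UnitAddCircle, MeasurableSet A → μ (f ⁻¹' A) = μ A) → μ = 0 :=
  delta_good_forall_implies_no_acis_general f F hmeas hgood
end
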